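/- arXiv:1610.06159 — 2 statements merged into one kernel-verified Lean document; each statement's English description precedes it below -/
import Mathlib

section
/- (Discrete-time RAGE theorem, absolutely continuous part.) Let U be a unitary operator on ℓ²(ℤ,ℂ) and ψ ∈ ℓ²(ℤ,ℂ). Suppose there is a finite Borel measure μ on the unit circle ∂𝔻, absolutely continuous with respect to arc-length measure Leb on ∂𝔻, whose moments match ψ: ∫_{∂𝔻} zⁿ dμ(z) = ⟨ψ, Uⁿψ⟩ for all n ∈ ℤ (i.e. the spectral measure of ψ is absolutely continuous). Then for every J ∈ ℕ, Σ_{j=−J}^{J} |⟨δ_j, Uⁿψ⟩|² → 0 as |n| → ∞. -/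
/-!
By Radon–Nikodym the moments `∫ wⁿ dμ` are the Fourier coefficients of a density on the circle,
so they tend to zero by the Riemann–Lebesgue lemma. As `⟪Uᵐψ, Uⁿψ⟫ = ⟪ψ, Uⁿ⁻ᵐψ⟫`, the inner
product of `Uⁿψ` with any vector of the span of the orbit of `ψ` tends to zero. Since the orbit is
bounded this persists on the closure of that span, and it holds trivially on its orthogonal
complement, hence for every vector, in particular for each `δ_j` of the finite box.
-/

noncomputable section
open scoped ENNReal
open MeasureTheory

/-- The Hilbert space ℓ²(ℤ, ℂ). -/
abbrev l2Z := lp (fun _ : ℤ => ℂ) 2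

/-- The standard orthonormal basis vector δ_j of ℓ²(ℤ, ℂ). -/
def delta (j : ℤ) : l2Z := lp.single 2 j (1 : ℂ)

/-- Arc-length measure on the unit circle ∂𝔻 ⊆ ℂ, the pushforward of Lebesgue
measure on [0, 2π) under τ ↦ e^{iτ}. -/
def circleLeb : Measure ℂ :=
  Measure.map (fun τ : ℝ => Complex.exp (Complex.I * τ))
    (volume.restrict (Set.Ico 0 (2 * Real.pi)))

open Filter Topology Complex
open scoped NNReal Real InnerProductSpace FourierTransform

section

variable {𝕜 E ι : Type*} [RCLike 𝕜] [NormedAddCommGroup E] [InnerProductSpace 𝕜 E]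

def innerTendstoZeroSubmodule (l : Filter ι) (v : ι → E) : Submodule 𝕜 E where
  carrier := {φ | Tendsto (fun i => ⟪φ, v i⟫_𝕜) l (𝓝 0)}
  zero_mem' := by simpa using tendsto_const_nhds
  add_mem' {φ φ'} hφ hφ' := by simpa [inner_add_left] using hφ.add hφ'
  smul_mem' c φ hφ := by simpa [inner_smul_left] using hφ.const_mul (starRingEnd 𝕜 c)

theorem isClosed_innerTendstoZeroSubmodule (l : Filter ι) {v : ι → E} {C : ℝ≥0}
    (hv : ∀ i, ‖v i‖ ≤ C) : IsClosed (innerTendstoZeroSubmodule (𝕜 := 𝕜) l v : Set E) := by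
  have hlip : ∀ i, LipschitzWith C (fun φ : E => ⟪φ, v i⟫_𝕜) := fun i =>
    LipschitzWith.of_dist_le_mul fun φ φ' => by
      rw [dist_eq_norm, dist_eq_norm, ← inner_sub_left, mul_comm]
      exact (norm_inner_le_norm _ _).trans (by gcongr; exact hv i)
  exact ((LipschitzWith.uniformEquicontinuous _ C hlip).equicontinuous).isClosed_setOfPred_tendsto
    (f := fun _ => 0) continuous_const

theorem tendsto_inner_zero_of_tendsto_inner_self [CompleteSpace E] {l : Filter ι} {v : ι → E}
    {C : ℝ≥0} (hv : ∀ i, ‖v i‖ ≤ C) (h : ∀ i, Tendsto (fun j => ⟪v i, v j⟫_𝕜) l (𝓝 0)) (φ : E) :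
    Tendsto (fun j => ⟪φ, v j⟫_𝕜) l (𝓝 0) := by
  set K := Submodule.span 𝕜 (Set.range v)
  set S := innerTendstoZeroSubmodule (𝕜 := 𝕜) l v
  have hclosure_le : Kᗮᗮ ≤ S := by
    rw [K.orthogonal_orthogonal_eq_closure]
    refine K.topologicalClosure_minimal ?_ (isClosed_innerTendstoZeroSubmodule l hv)
    exact Submodule.span_le.2 (Set.range_subset_iff.2 h)
  have horth_le : Kᗮ ≤ S := fun ψ hψ => by
    have : ∀ j, ⟪ψ, v j⟫_𝕜 = 0 := fun j =>
      (K.mem_orthogonal' ψ).1 hψ _ (Submodule.subset_span ⟨j, rfl⟩)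
    simpa [S, innerTendstoZeroSubmodule, this] using tendsto_const_nhds
  have hS : S = ⊤ := eq_top_iff.2 <|
    Kᗮ.sup_orthogonal_of_hasOrthogonalProjection.symm.le.trans (sup_le horth_le hclosure_le)
  exact (hS ▸ Submodule.mem_top : φ ∈ S)

theorem LinearIsometryEquiv.inner_zpow_apply_zpow_apply (U : E ≃ₗᵢ[𝕜] E) (ψ : E) (m n : ℤ) :
    ⟪(U ^ m) ψ, (U ^ n) ψ⟫_𝕜 = ⟪ψ, (U ^ (n - m)) ψ⟫_𝕜 := by
  rw [← (U ^ m).inner_map_map ψ, ← Function.comp_apply (f := ⇑(U ^ m)),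
    ← LinearIsometryEquiv.coe_mul, ← zpow_add, add_sub_cancel]

theorem LinearIsometryEquiv.tendsto_inner_zpow_apply_cofinite [CompleteSpace E]
    (U : E ≃ₗᵢ[𝕜] E) {ψ : E} (h : Tendsto (fun n : ℤ => ⟪ψ, (U ^ n) ψ⟫_𝕜) cofinite (𝓝 0))
    (φ : E) : Tendsto (fun n : ℤ => ⟪φ, (U ^ n) ψ⟫_𝕜) cofinite (𝓝 0) := by
  refine tendsto_inner_zero_of_tendsto_inner_self (C := ‖ψ‖₊) (fun n => ((U ^ n).norm_map ψ).le)
    (fun m => ?_) φ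
  simp_rw [U.inner_zpow_apply_zpow_apply]
  exact h.comp (sub_left_injective (b := m)).tendsto_cofinite

end

instance isFiniteMeasure_circleLeb : IsFiniteMeasure circleLeb := by
  unfold circleLeb
  infer_instance

theorem integral_circleLeb {E : Type*} [NormedAddCommGroup E] [NormedSpace ℝ E] {f : ℂ → E}
    (hf : AEStronglyMeasurable f circleLeb) :
    ∫ w, f w ∂circleLeb = ∫ τ in Set.Ico 0 (2 * π), f (exp (I * τ)) :=
  integral_map (by fun_prop) hf

-- As in `Real.tendsto_integral_exp_smul_cocompact`, no integrability is needed: the integrals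
-- of a non-integrable `F` all vanish.
theorem tendsto_integral_exp_mul_I_smul_cocompact {E : Type*} [NormedAddCommGroup E]
    [NormedSpace ℂ E] (F : ℝ → E) :
    Tendsto (fun t : ℝ => ∫ τ : ℝ, exp (t * τ * I) • F τ) (cocompact ℝ) (𝓝 0) := by
  let h : ℝ ≃ₜ ℝ := (Homeomorph.mulRight₀ (-(2 * π)⁻¹) (by simp [Real.pi_ne_zero]))
  refine ((Real.tendsto_integral_exp_smul_cocompact F).comp h.map_cocompact.le).congr fun t => ?_
  refine integral_congr_ae (ae_of_all _ fun τ => ?_)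
  simp only [Circle.smul_def, Real.fourierChar_apply]
  congr 2
  simp only [h, Homeomorph.coe_mulRight₀]
  push_cast
  field_simp

theorem tendsto_integral_zpow_cofinite_of_absolutelyContinuous (μ : Measure ℂ) [SigmaFinite μ]
    (habs : μ ≪ circleLeb) : Tendsto (fun n : ℤ => ∫ w, w ^ n ∂μ) cofinite (𝓝 0) := by
  let g : ℂ → ℝ := fun w => (μ.rnDeriv circleLeb w).toReal
  have hg : Measurable g := (μ.measurable_rnDeriv circleLeb).ennreal_toReal
  let F : ℝ → ℂ := (Set.Ico 0 (2 * π)).indicator fun τ => g (exp (I * τ))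
  have hmoment : ∀ n : ℤ, ∫ w, w ^ n ∂μ = ∫ τ : ℝ, exp (n * τ * I) • F τ := fun n => by
    rw [← integral_rnDeriv_smul habs,
      integral_circleLeb (f := fun w => g w • w ^ n) (hg.aestronglyMeasurable.smul (by fun_prop)),
      ← integral_indicator measurableSet_Ico]
    refine integral_congr_ae (ae_of_all _ fun τ => ?_)
    by_cases hτ : τ ∈ Set.Ico 0 (2 * π)
    · simp only [F, Set.indicator_of_mem hτ, ← exp_int_mul, real_smul, smul_eq_mul]
      ring_nf
    · simp [F, hτ]
  simp_rw [hmoment]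
  exact (tendsto_integral_exp_mul_I_smul_cocompact F).comp Int.tendsto_coe_cofinite

theorem rage_absolutely_continuous_general
    (U : l2Z ≃ₗᵢ[ℂ] l2Z) (ψ : l2Z)
    (μ : Measure ℂ) [IsFiniteMeasure μ]
    (habs : μ ≪ circleLeb)
    (hmom : ∀ n : ℤ, ∫ w, w ^ n ∂μ = (inner ℂ ψ ((U ^ n) ψ) : ℂ)) :
    ∀ J : ℕ,
      Filter.Tendsto
        (fun n : ℤ => ∑ j ∈ Finset.Icc (-(J : ℤ)) (J : ℤ),
          ‖(inner ℂ (delta j) ((U ^ n) ψ) : ℂ)‖ ^ 2)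
        Filter.cofinite (nhds 0) := by
  intro J
  have hcorr : Tendsto (fun n : ℤ => ⟪ψ, (U ^ n) ψ⟫_ℂ) cofinite (𝓝 0) :=
    (tendsto_integral_zpow_cofinite_of_absolutelyContinuous μ habs).congr hmom
  simpa using tendsto_finsetSum (Finset.Icc (-(J : ℤ)) J) fun j _ =>
    ((U.tendsto_inner_zpow_apply_cofinite hcorr (delta j)).norm.pow 2)

/-- discrete-time RAGE theorem, absolutely continuous part. If the
spectral measure of ψ (a finite measure on ∂𝔻 with moments ⟨ψ, Uⁿψ⟩) is absolutely
continuous with respect to arc length, then the probability of finding Uⁿψ in any fixed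
finite box tends to zero as |n| → ∞. -/
theorem rage_absolutely_continuous
    (U : l2Z ≃ₗᵢ[ℂ] l2Z) (ψ : l2Z)
    (μ : Measure ℂ) [IsFiniteMeasure μ]
    (hsupp : μ (Metric.sphere (0 : ℂ) 1)ᶜ = 0)
    (habs : μ ≪ circleLeb)
    (hmom : ∀ n : ℤ, ∫ w, w ^ n ∂μ = (inner ℂ ψ ((U ^ n) ψ) : ℂ)) :
    ∀ J : ℕ,
      Filter.Tendsto
        (fun n : ℤ => ∑ j ∈ Finset.Icc (-(J : ℤ)) (J : ℤ),
          ‖(inner ℂ (delta j) ((U ^ n) ψ) : ℂ)‖ ^ 2)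
        Filter.cofinite (nhds 0) :=
  rage_absolutely_continuous_general U ψ μ habs hmom
end
end

section
/- (Gesztesy–Zinchenko transfer-matrix recursion.) Let α_n ∈ 𝔻, λ_n ∈ ∂𝔻 for n ∈ ℤ, set ρ_n = √(1−|α_n|²), let z ∈ ℂ∖{0}, and suppose u, v : ℤ → ℂ satisfy, for every n ∈ ℤ: λ_{2n}(conj(α_{2n})·v_{2n} + ρ_{2n}·v_{2n+1}) = z·u_{2n}, λ_{2n}(ρ_{2n}·v_{2n} − α_{2n}·v_{2n+1}) = z·u_{2n+1}, λ_{2n−1}(conj(α_{2n−1})·u_{2n−1} + ρ_{2n−1}·u_{2n}) = v_{2n−1}, and λ_{2n−1}(ρ_{2n−1}·u_{2n−1} − α_{2n−1}·u_{2n}) = v_{2n} (i.e. ℳu = v and ℒv = zu, so ℰu = zu for the pCMV operator ℰ = ℒℳ). Then for every n ∈ ℤ: (u_{2n}, v_{2n})ᵀ = P(α_{2n−1},λ_{2n−1};z)·(u_{2n−1}, v_{2n−1})ᵀ and (u_{2n+1}, v_{2n+1})ᵀ = Q(α_{2n},λ_{2n};z)·(u_{2n}, v_{2n})ᵀ. 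-/
/-! Each block equation of ℳu = v (resp. ℒv = zu) is a 2×2 linear relation whose first row
already expresses one entry of the next pair through the current one; substituting it into the
second row and using ρ² + |α|² = 1 gives the other entry. -/

noncomputable section
open scoped ENNReal
open Complex Matrix

/-- ρ = √(1 − |α|²). -/
def rho (w : ℂ) : ℝ := Real.sqrt (1 - ‖w‖ ^ 2)

/-- The Gesztesy–Zinchenko transfer matrix P(α, λ; z). -/
def Pmat (α lam z : ℂ) : Matrix (Fin 2) (Fin 2) ℂ :=
  ((rho α : ℂ))⁻¹ • !![-((starRingEnd ℂ) α), lam⁻¹; lam, -α]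

/-- The Gesztesy–Zinchenko transfer matrix Q(α, λ; z). -/
def Qmat (α lam z : ℂ) : Matrix (Fin 2) (Fin 2) ℂ :=
  ((rho α : ℂ))⁻¹ • !![-α, lam * z⁻¹; lam⁻¹ * z, -((starRingEnd ℂ) α)]

/-- Y(n; z): the one-step transfer matrix. -/
def Ymat (a lam : ℤ → ℂ) (z : ℂ) (n : ℤ) : Matrix (Fin 2) (Fin 2) ℂ :=
  if Odd n then Pmat (a n) (lam n) z else Qmat (a n) (lam n) z

/-- Z(n, 0; z) = Y(n−1; z) ⋯ Y(0; z). -/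
def Zmat (a lam : ℤ → ℂ) (z : ℂ) : ℕ → Matrix (Fin 2) (Fin 2) ℂ
  | 0 => 1
  | n + 1 => Ymat a lam z n * Zmat a lam z n

/-- Frobenius (Hilbert–Schmidt) norm of a 2×2 complex matrix. -/
def matNorm (M : Matrix (Fin 2) (Fin 2) ℂ) : ℝ :=
  Real.sqrt (∑ i, ∑ j, ‖M i j‖ ^ 2)

/-- The group SU(1,1) of 2×2 complex matrices. -/
def SU11 : Set (Matrix (Fin 2) (Fin 2) ℂ) :=
  {M | M.det = 1 ∧ Mᴴ * !![1, 0; 0, -1] * M = !![1, 0; 0, -1]}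

/-- The rotation matrix R_θ = diag(e^{iθ}, e^{−iθ}). -/
def Rtheta (θ : ℝ) : Matrix (Fin 2) (Fin 2) ℂ :=
  !![Complex.exp (θ * Complex.I), 0; 0, Complex.exp (-θ * Complex.I)]

/-- 𝕂: the diagonal subgroup of SU(1,1). -/
def Kset : Set (Matrix (Fin 2) (Fin 2) ℂ) := {R | ∃ θ : ℝ, R = Rtheta θ}

/-- The iTrace of a 2×2 complex matrix. -/
def iTr (M : Matrix (Fin 2) (Fin 2) ℂ) : ℂ := (M 0 0 - M 1 1) / (2 * Complex.I)

/-- M_ξ, the standard SU(1,1) element moving 0 to ξ. -/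
def Mxi (ξ : ℂ) : Matrix (Fin 2) (Fin 2) ℂ :=
  ((Real.sqrt (1 - ‖ξ‖ ^ 2) : ℂ))⁻¹ • !![1, ξ; (starRingEnd ℂ) ξ, 1]

lemma ofReal_rho_ne_zero {w : ℂ} (hw : ‖w‖ < 1) : (rho w : ℂ) ≠ 0 := by
  have : 0 < rho w := Real.sqrt_pos.mpr (by nlinarith [norm_nonneg w])
  exact_mod_cast this.ne'

lemma ofReal_rho_sq {w : ℂ} (hw : ‖w‖ < 1) :
    (rho w : ℂ) ^ 2 = 1 - starRingEnd ℂ w * w := by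
  rw [mul_comm, mul_conj, normSq_eq_norm_sq, ← ofReal_pow, rho,
    Real.sq_sqrt (by nlinarith [norm_nonneg w])]
  push_cast
  ring

theorem Pmat_mulVec_of_eq {α lam z x₀ y₀ x₁ y₁ : ℂ} (hα : ‖α‖ < 1) (hlam : lam ≠ 0)
    (h₀ : lam * (starRingEnd ℂ α * x₀ + rho α * x₁) = y₀)
    (h₁ : lam * (rho α * x₀ - α * x₁) = y₁) :
    Pmat α lam z *ᵥ ![x₀, y₀] = ![x₁, y₁] := by
  rw [Pmat, smul_mulVec, inv_smul_eq_iff₀ (ofReal_rho_ne_zero hα), mulVec_fin_two, smul_vec2]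
  simp only [of_apply, cons_val', cons_val_zero, cons_val_one, cons_val_fin_one, smul_eq_mul,
    vecCons_inj, and_true]
  constructor
  · field_simp
    linear_combination -h₀
  · linear_combination α * h₀ + rho α * h₁ - lam * x₀ * ofReal_rho_sq hα

theorem Qmat_mulVec_of_eq {α lam z x₀ y₀ x₁ y₁ : ℂ} (hα : ‖α‖ < 1) (hlam : lam ≠ 0)
    (hz : z ≠ 0)
    (h₀ : lam * (starRingEnd ℂ α * y₀ + rho α * y₁) = z * x₀)
    (h₁ : lam * (rho α * y₀ - α * y₁) = z * x₁) :
    Qmat α lam z *ᵥ ![x₀, y₀] = ![x₁, y₁] := by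
  rw [Qmat, smul_mulVec, inv_smul_eq_iff₀ (ofReal_rho_ne_zero hα), mulVec_fin_two, smul_vec2]
  simp only [of_apply, cons_val', cons_val_zero, cons_val_one, cons_val_fin_one, smul_eq_mul,
    vecCons_inj, and_true]
  constructor
  · field_simp
    linear_combination α * h₀ + rho α * h₁ - lam * y₀ * ofReal_rho_sq hα
  · field_simp
    linear_combination -h₀

/-- Gesztesy–Zinchenko transfer-matrix recursion. If ℳu = v and
ℒv = zu (so that ℰu = zu), then consecutive pairs (u_n, v_n) are related by the
transfer matrices P and Q. -/
theorem gz_recursion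
    (a lam : ℤ → ℂ) (ha : ∀ n, ‖a n‖ < 1) (hl : ∀ n, ‖lam n‖ = 1)
    (z : ℂ) (hz : z ≠ 0) (u v : ℤ → ℂ)
    (h1 : ∀ n : ℤ, lam (2 * n) * ((starRingEnd ℂ) (a (2 * n)) * v (2 * n) +
        (rho (a (2 * n)) : ℂ) * v (2 * n + 1)) = z * u (2 * n))
    (h2 : ∀ n : ℤ, lam (2 * n) * ((rho (a (2 * n)) : ℂ) * v (2 * n) -
        a (2 * n) * v (2 * n + 1)) = z * u (2 * n + 1))
    (h3 : ∀ n : ℤ, lam (2 * n - 1) * ((starRingEnd ℂ) (a (2 * n - 1)) * u (2 * n - 1) +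
        (rho (a (2 * n - 1)) : ℂ) * u (2 * n)) = v (2 * n - 1))
    (h4 : ∀ n : ℤ, lam (2 * n - 1) * ((rho (a (2 * n - 1)) : ℂ) * u (2 * n - 1) -
        a (2 * n - 1) * u (2 * n)) = v (2 * n)) :
    ∀ n : ℤ,
      Matrix.mulVec (Pmat (a (2 * n - 1)) (lam (2 * n - 1)) z)
          ![u (2 * n - 1), v (2 * n - 1)] = ![u (2 * n), v (2 * n)] ∧
      Matrix.mulVec (Qmat (a (2 * n)) (lam (2 * n)) z)
          ![u (2 * n), v (2 * n)] = ![u (2 * n + 1), v (2 * n + 1)] := by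
  intro n
  have hlam : ∀ m, lam m ≠ 0 := fun m => norm_ne_zero_iff.mp (by simp [hl m])
  exact ⟨Pmat_mulVec_of_eq (ha _) (hlam _) (h3 n) (h4 n),
    Qmat_mulVec_of_eq (ha _) (hlam _) hz (h1 n) (h2 n)⟩
end
end
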